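/- Let n ≥ 1 and t ≥ 0 be integers. If n is even then 2·j(n,t) = C(n+1, 2t+1), and if n is odd then 2·j(n,t) = C(n+1, 2t), where C denotes the blobbed Catalan triangle and j(n,t) counts left extensions of w_n^J with t added dots in row n. -/

import Mathlib

/-!
A left extension of `w_n^J` keeps the right endpoints of `w_n^J`, and its `t` prepended blocks
all end at `n`; so it is determined by its left endpoints `x₁, …, x_{t+κ}`, which are bounded
termwise by `(n, …, n, λ₁, …, λ_κ)` and decrease strictly except at `0`. Writing `F(bs, c)` for
the number of such sequences with bounds `bs` and first term at most `c`, one has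
`F(b :: bs, c + 1) = F(bs, c) + F(b :: bs, c)`, which is the recursion of the blobbed Catalan
triangle, so prepending a bound moves the column of the triangle by two. The left endpoints of
`w_n^J` are `(2m, 2m - 2, …, 2, 0, 0)` with `m = ⌊n / 2⌋`, for which
`2 F(λ, c) = C(c + 1, 2m + 1 - c)`; the `t` bounds `n` in front then give
`2 j(n, t) = C(n + 1, 2t + 2m + 1 - n)`.
-/

/-- Auxiliary (index-shifted) version of the blobbed Catalan triangle:
`blobbedCAux (i+1) (j+1) = C(i,j)`. -/
def blobbedCAux : ℕ → ℕ → ℕ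
  | 0, j => if j % 2 = 0 then 1 else 0
  | 1, j => if j % 2 = 1 then 1 else 0
  | _ + 2, 0 => 0
  | i + 2, j + 1 => blobbedCAux (i + 1) j + blobbedCAux (i + 1) (j + 2)

/-- The blobbed Catalan triangle `C(i,j)`, defined for integers `i, j ≥ -1`:
`C(i,j) = 1` if `i ∈ {-1,0}` and `i+j` is even, `C(i,j) = 0` if `i ∈ {-1,0}` and `i+j`
is odd, `C(i,-1) = 0` for `i ≥ 1`, and `C(i,j) = C(i-1,j-1) + C(i-1,j+1)` for
`i ≥ 1`, `j ≥ 0`. -/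
def blobbedC (i j : ℤ) : ℕ := blobbedCAux (i + 1).toNat (j + 1).toNat

/-- `w` is a positive normal form on `n`: a sequence of blocks `(l_i, r_i)` with
`n ≥ l_1 ≥ … ≥ l_k ≥ 0`, `n ≥ r_1 ≥ … ≥ r_k ≥ 0`, `l_i ≤ r_i` for all `i`,
where `l` may repeat (consecutively) only at the value `0` and `r` may repeat only
at the value `n`. -/
def IsPNF (n : ℤ) (w : List (ℤ × ℤ)) : Prop :=
  (∀ p ∈ w, 0 ≤ p.1 ∧ p.1 ≤ p.2 ∧ p.2 ≤ n) ∧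
  List.Chain' (fun p q : ℤ × ℤ =>
    q.1 ≤ p.1 ∧ q.2 ≤ p.2 ∧ (q.1 = p.1 → p.1 = 0) ∧ (q.2 = p.2 → p.2 = n)) w

/-- The affine length of a normal form: the number of blocks whose right endpoint is `n`. -/
def affineLength (n : ℤ) (w : List (ℤ × ℤ)) : ℕ :=
  w.countP (fun p => p.2 = n)

/-- `numPNF n s` is the number `a(n,s)` of positive normal forms on `n` of affine length `s`. -/
noncomputable def numPNF (n : ℤ) (s : ℕ) : ℕ :=
  Nat.card {w : List (ℤ × ℤ) // IsPNF n w ∧ affineLength n w = s}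

/-- The grid of a normal form `((l_1,r_1),…,(l_k,r_k))`:
`{(i,j) ∈ ℤ² : 1 ≤ i ≤ k, l_i ≤ j ≤ r_i}`. -/
def grid (w : List (ℤ × ℤ)) : Set (ℤ × ℤ) :=
  {p | ∃ i : ℕ, i < w.length ∧ p.1 = (i : ℤ) + 1 ∧
    (w.getD i (0, 0)).1 ≤ p.2 ∧ p.2 ≤ (w.getD i (0, 0)).2}

/-- `G` contains a horizontal translate of `G'`. -/
def ContainsTranslate (G G' : Set (ℤ × ℤ)) : Prop :=
  ∃ m : ℤ, ∀ p ∈ G', ((p.1 + m, p.2) : ℤ × ℤ) ∈ G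

/-- The normal form `w_n^I`. -/
def wI (n : ℤ) : List (ℤ × ℤ) :=
  if n = 1 then [(1, 1), (0, 1)]
  else if Even n then
    (n - 1, n) :: (((List.range ((n - 2) / 2).toNat).map
      fun t : ℕ => (n - 3 - 2 * (t : ℤ), n - 1 - 2 * (t : ℤ))) ++ [(0, 1)])
  else
    (n, n) :: (n - 2, n) :: (((List.range ((n - 3) / 2).toNat).map
      fun t : ℕ => (n - 4 - 2 * (t : ℤ), n - 2 - 2 * (t : ℤ))) ++ [(0, 1)])

/-- The normal form `w_n^J`. -/
def wJ (n : ℤ) : List (ℤ × ℤ) :=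
  if Even n then
    (n, n) :: (n - 2, n) :: (((List.range ((n - 2) / 2).toNat).map
      fun t : ℕ => (n - 4 - 2 * (t : ℤ), n - 2 - 2 * (t : ℤ))) ++ [(0, 0)])
  else
    (n - 1, n) :: (((List.range ((n - 1) / 2).toNat).map
      fun t : ℕ => (n - 3 - 2 * (t : ℤ), n - 1 - 2 * (t : ℤ))) ++ [(0, 0)])

/-- `numBadPNF n s` is the number `d(n,s)` of positive normal forms on `n` of affine
length `s` whose grid contains a horizontal translate of `G(w_n^I)` or of `G(w_n^J)`. -/
noncomputable def numBadPNF (n : ℤ) (s : ℕ) : ℕ :=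
  Nat.card {w : List (ℤ × ℤ) // IsPNF n w ∧ affineLength n w = s ∧
    (ContainsTranslate (grid w) (grid (wI n)) ∨ ContainsTranslate (grid w) (grid (wJ n)))}

/-- `leftExtCount n W t` is the number of positive normal forms on `n` of the shape
`(b_1,…,b_m,(l_1',ρ_1),…,(l_κ',ρ_κ))` where `W = ((λ_1,ρ_1),…,(λ_κ,ρ_κ))`,
`l_i' ≤ λ_i` for all `i`, and exactly `t` of the prepended blocks `b_1,…,b_m` have
right endpoint equal to `n`. -/
noncomputable def leftExtCount (n : ℤ) (W : List (ℤ × ℤ)) (t : ℕ) : ℕ :=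
  Nat.card {w : List (ℤ × ℤ) // IsPNF n w ∧ ∃ b tail : List (ℤ × ℤ),
    w = b ++ tail ∧ tail.length = W.length ∧
    (∀ i < W.length, (tail.getD i (0, 0)).2 = (W.getD i (0, 0)).2 ∧
      (tail.getD i (0, 0)).1 ≤ (W.getD i (0, 0)).1) ∧
    b.countP (fun p => p.2 = n) = t}

open List
open scoped Finset

theorem List.isChain_and_iff {α : Type*} {R S : α → α → Prop} {l : List α} :
    IsChain (fun a b => R a b ∧ S a b) l ↔ IsChain R l ∧ IsChain S l := by
  simp only [isChain_iff_getElem, ← forall_and]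

theorem List.forall₂_iff_getD {α β : Type*} {R : α → β → Prop} {l₁ : List α} {l₂ : List β}
    (d₁ : α) (d₂ : β) :
    Forall₂ R l₁ l₂ ↔ l₁.length = l₂.length ∧ ∀ i < l₂.length, R (l₁.getD i d₁) (l₂.getD i d₂) := by
  rw [forall₂_iff_get]
  refine and_congr_right fun h => ⟨fun H i hi => ?_, fun H i h₁ h₂ => ?_⟩
  · simpa [getD_eq_getElem, hi, h] using H i (h ▸ hi) hi
  · simpa [getD_eq_getElem, h₁, h₂] using H i h₂

theorem List.forall₂_replicate_right_iff {α β : Type*} {R : α → β → Prop} {l : List α} {k : ℕ}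
    {b : β} : Forall₂ R l (replicate k b) ↔ l.length = k ∧ ∀ a ∈ l, R a b := by
  induction l generalizing k with
  | nil => cases k <;> simp
  | cons a l ih =>
    cases k
    · simp
    · simp only [replicate_succ, forall₂_cons, ih, length_cons, Nat.succ_inj, forall_mem_cons]
      tauto

theorem blobbedC_eq_add (i j : ℤ) (hi : 1 ≤ i) (hj : 0 ≤ j) :
    blobbedC i j = blobbedC (i - 1) (j - 1) + blobbedC (i - 1) (j + 1) := by
  obtain ⟨a, rfl⟩ : ∃ a : ℕ, i = a + 1 := ⟨(i - 1).toNat, by omega⟩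
  obtain ⟨b, rfl⟩ : ∃ b : ℕ, j = b := ⟨j.toNat, by omega⟩
  simp only [blobbedC, show ((a : ℤ) + 1 + 1).toNat = a + 2 by omega,
    show ((a : ℤ) + 1 - 1 + 1).toNat = a + 1 by omega, show ((b : ℤ) + 1).toNat = b + 1 by omega,
    show ((b : ℤ) - 1 + 1).toNat = b by omega, show ((b : ℤ) + 1 + 1).toNat = b + 2 by omega]
  rfl

theorem blobbedC_neg_one (i : ℤ) (hi : 1 ≤ i) : blobbedC i (-1) = 0 := by
  obtain ⟨a, rfl⟩ : ∃ a : ℕ, i = a + 1 := ⟨(i - 1).toNat, by omega⟩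
  simp only [blobbedC, show ((a : ℤ) + 1 + 1).toNat = a + 2 by omega,
    show ((-1 : ℤ) + 1).toNat = 0 by omega]
  rfl

theorem blobbedC_one_add_two (j : ℤ) (hj : 0 ≤ j) : blobbedC 1 (j + 2) = blobbedC 1 j := by
  obtain ⟨b, rfl⟩ : ∃ b : ℕ, j = b := ⟨j.toNat, by omega⟩
  simp only [blobbedC, show ((1 : ℤ) + 1).toNat = 2 by omega,
    show ((b : ℤ) + 2 + 1).toNat = b + 1 + 2 by omega, show ((b : ℤ) + 1).toNat = b + 1 by omega]
  simp [blobbedCAux]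

def EndpointStep (m a b : ℤ) : Prop := b ≤ a ∧ (b = a → a = m)

section BoundedChains

open Finset

noncomputable def boundedChains : List ℤ → ℤ → Finset (List ℤ)
  | [], _ => {[]}
  | b :: bs, c =>
    (Icc 0 (min b c)).biUnion fun x => (boundedChains bs (max (x - 1) 0)).image (x :: ·)

theorem mem_boundedChains {bs : List ℤ} {c : ℤ} {l : List ℤ} :
    l ∈ boundedChains bs c ↔ Forall₂ (fun x b => 0 ≤ x ∧ x ≤ b) l bs ∧
      (∀ x ∈ l.head?, x ≤ c) ∧ IsChain (EndpointStep 0) l := by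
  induction bs generalizing c l with
  | nil => cases l <;> simp [boundedChains]
  | cons b bs ih =>
    rcases l with _ | ⟨x, u⟩
    · simp [boundedChains]
    simp only [boundedChains, mem_biUnion, mem_image, mem_Icc, cons.injEq, forall₂_cons,
      head?_cons, Option.mem_some_iff, ih, exists_eq_right_right, forall_eq']
    rcases u with _ | ⟨y, v⟩
    · simp only [isChain_singleton, and_true]
      grind
    · rcases bs with _ | ⟨b', bs⟩
      · simp
      simp only [forall₂_cons, head?_cons, Option.mem_some_iff, forall_eq', isChain_cons_cons,
        EndpointStep]
      grind

theorem card_boundedChains_cons (b : ℤ) (bs : List ℤ) (c : ℤ) :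
    #(boundedChains (b :: bs) c) = ∑ x ∈ Icc 0 (min b c), #(boundedChains bs (max (x - 1) 0)) := by
  rw [boundedChains, card_biUnion]
  · exact sum_congr rfl fun x _ => card_image_of_injective _ cons_injective
  · intro x _ y _ hxy
    simp only [Function.onFun, Finset.disjoint_left, mem_image]
    rintro l ⟨u, _, rfl⟩ ⟨v, _, hv⟩
    exact hxy (cons_eq_cons.mp hv).1.symm

theorem card_boundedChains_cons_zero (b : ℤ) (bs : List ℤ) (hb : 0 ≤ b) :
    #(boundedChains (b :: bs) 0) = #(boundedChains bs 0) := by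
  simp [card_boundedChains_cons, min_eq_right hb]

theorem card_boundedChains_cons_add_one (b : ℤ) (bs : List ℤ) (c : ℤ) (hc : 0 ≤ c) (hcb : c < b) :
    #(boundedChains (b :: bs) (c + 1)) = #(boundedChains bs c) + #(boundedChains (b :: bs) c) := by
  rw [card_boundedChains_cons, card_boundedChains_cons, min_eq_right hcb.le,
    min_eq_right (by omega), ← Ico_insert_right (by omega), sum_insert (by simp),
    Ico_add_one_right_eq_Icc, add_sub_cancel_right, max_eq_left hc]

theorem card_boundedChains_cons_of_le (b : ℤ) (bs : List ℤ) (c : ℤ) (hbc : b ≤ c) :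
    #(boundedChains (b :: bs) c) = #(boundedChains (b :: bs) b) := by
  rw [card_boundedChains_cons, card_boundedChains_cons, min_eq_left hbc, min_self]

theorem two_mul_card_boundedChains_cons (b : ℤ) (bs : List ℤ) (K : ℤ) (hK : 0 ≤ K)
    (h : ∀ c, 0 ≤ c → c ≤ K → c ≤ b → 2 * #(boundedChains bs c) = blobbedC (c + 1) (K - c))
    (c : ℤ) (hc : 0 ≤ c) (hcK : c ≤ K + 1) (hcb : c ≤ b) :
    2 * #(boundedChains (b :: bs) c) = blobbedC (c + 1) (K + 2 - c) := by
  induction c, hc using Int.leInduction with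
  | base =>
    rw [card_boundedChains_cons_zero _ _ hcb, h 0 le_rfl hK hcb, sub_zero, sub_zero, zero_add,
      blobbedC_one_add_two _ hK]
  | succ c hc ih =>
    rw [card_boundedChains_cons_add_one _ _ _ hc (by omega), mul_add, ih (by omega) (by omega),
      h c hc (by omega) (by omega), blobbedC_eq_add (c + 1 + 1) _ (by omega) (by omega)]
    congr 2 <;> ring

theorem two_mul_card_boundedChains_replicate_append (n K : ℤ) (bs : List ℤ) (hnK : n ≤ K)
    (h : ∀ c, 0 ≤ c → c ≤ n → 2 * #(boundedChains bs c) = blobbedC (c + 1) (K - c))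
    (t : ℕ) (c : ℤ) (hc : 0 ≤ c) (hcn : c ≤ n) :
    2 * #(boundedChains (replicate t n ++ bs) c) = blobbedC (c + 1) (2 * t + K - c) := by
  induction t generalizing c with
  | zero => simpa using h c hc hcn
  | succ t ih =>
    rw [replicate_succ, cons_append, two_mul_card_boundedChains_cons n _ (2 * t + K) (by omega)
      (fun c hc _ hcn => ih c hc hcn) c hc (by omega) hcn]
    push_cast
    ring_nf

def staircase : ℕ → List (ℤ × ℤ)
  | 0 => [(0, 0)]
  | m + 1 => (2 * m, 2 * m + 2) :: staircase m

theorem two_mul_card_boundedChains_staircase (m : ℕ) (c : ℤ) (hc : 0 ≤ c) (hcm : c ≤ 2 * m + 1) :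
    2 * #(boundedChains (2 * m :: (staircase m).map Prod.fst) c) =
      blobbedC (c + 1) (2 * m + 1 - c) := by
  induction m generalizing c with
  | zero =>
    have hcard : #(boundedChains [0, 0] c) = 1 := by
      simp [boundedChains, min_eq_left hc]
    simp only [staircase, CharP.cast_eq_zero, mul_zero, List.map_cons, List.map_nil, hcard]
    interval_cases c <;> decide
  | succ m ih =>
    have hcons : ∀ c, 0 ≤ c → c ≤ 2 * (m : ℤ) + 2 →
        2 * #(boundedChains (2 * (m + 1 : ℕ) :: (staircase (m + 1)).map Prod.fst) c) =
          blobbedC (c + 1) (2 * m + 3 - c) := by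
      intro c hc hcm
      exact two_mul_card_boundedChains_cons _ _ (2 * m + 1) (by omega)
        (fun c hc hcm _ => ih c hc hcm) c hc (by omega) (by push_cast; omega)
    push_cast at hcm hcons ⊢
    rcases le_or_gt c (2 * m + 2) with hcm' | hcm'
    · rw [hcons c hc hcm']
      ring_nf
    · obtain rfl : c = 2 * m + 3 := by omega
      rw [card_boundedChains_cons_of_le _ _ _ (by omega), hcons _ (by omega) (by omega),
        show 2 * (m : ℤ) + 3 + 1 = 2 * m + 4 by ring,
        show 2 * ((m : ℤ) + 1) + 1 - (2 * m + 3) = 0 by ring,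
        blobbedC_eq_add _ _ (by omega) le_rfl, zero_sub, blobbedC_neg_one _ (by omega), zero_add]
      congr 1 <;> ring

end BoundedChains

theorem isPNF_iff (n : ℤ) (w : List (ℤ × ℤ)) :
    IsPNF n w ↔ (∀ p ∈ w, 0 ≤ p.1 ∧ p.1 ≤ p.2 ∧ p.2 ≤ n) ∧
      IsChain (EndpointStep 0) (w.map Prod.fst) ∧ IsChain (EndpointStep n) (w.map Prod.snd) := by
  rw [IsPNF, isChain_map, isChain_map, ← isChain_and_iff]
  exact and_congr_right fun _ => IsChain.iff fun p q => by unfold EndpointStep; tauto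

theorem IsPNF.snd_eq_of_append_cons {n : ℤ} {b l : List (ℤ × ℤ)} {q : ℤ × ℤ}
    (hw : IsPNF n (b ++ q :: l)) (hq : q.2 = n) : ∀ x ∈ b, x.2 = n := by
  obtain ⟨hbd, -, hch⟩ := (isPNF_iff n _).mp hw
  have hpw : ((b ++ q :: l).map Prod.snd).Pairwise (· ≥ ·) :=
    isChain_iff_pairwise.mp (hch.imp fun _ _ h => h.1)
  rw [pairwise_map, pairwise_append] at hpw
  intro x hx
  have := hpw.2.2 x hx q mem_cons_self
  have := (hbd x (mem_append_left _ hx)).2.2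
  omega

def ExtendsLeft (q p : ℤ × ℤ) : Prop := q.2 = p.2 ∧ q.1 ≤ p.1

theorem isLeftExtension_iff {n : ℤ} {t : ℕ} {p : ℤ × ℤ} {W w : List (ℤ × ℤ)} (hp : p.2 = n)
    (hw : IsPNF n w) :
    (∃ b tail : List (ℤ × ℤ), w = b ++ tail ∧ tail.length = (p :: W).length ∧
      (∀ i < (p :: W).length, (tail.getD i (0, 0)).2 = ((p :: W).getD i (0, 0)).2 ∧
        (tail.getD i (0, 0)).1 ≤ ((p :: W).getD i (0, 0)).1) ∧
      b.countP (fun p => p.2 = n) = t) ↔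
    Forall₂ ExtendsLeft w (replicate t (n, n) ++ p :: W) := by
  constructor
  · rintro ⟨b, tail, rfl, hlen, hget, rfl⟩
    have htail : Forall₂ ExtendsLeft tail (p :: W) :=
      (forall₂_iff_getD (0, 0) (0, 0)).mpr ⟨hlen, hget⟩
    obtain ⟨q, tail', ⟨hqp, -⟩, -, rfl⟩ := forall₂_cons_right_iff.mp htail
    have hb := hw.snd_eq_of_append_cons (hqp.trans hp)
    refine rel_append (forall₂_replicate_right_iff.mpr ⟨?_, fun x hx => ⟨hb x hx, ?_⟩⟩) htail
    · exact (countP_eq_length.mpr fun x hx => decide_eq_true (hb x hx)).symm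
    · have := (hw.1 x (mem_append_left _ hx)).2
      simp only [hb x hx] at this ⊢
      exact this.1
  · intro h
    have hb := forall₂_replicate_right_iff.mp
      (by simpa using forall₂_take_append w (replicate t (n, n)) _ h)
    have htail : Forall₂ ExtendsLeft (w.drop t) (p :: W) := by
      simpa using forall₂_drop_append w (replicate t (n, n)) _ h
    refine ⟨w.take t, w.drop t, (take_append_drop t w).symm, ?_⟩
    rw [← and_assoc]
    refine ⟨(forall₂_iff_getD (0, 0) (0, 0)).mp htail, ?_⟩
    rw [countP_eq_length.mpr fun x hx => decide_eq_true (hb.2 x hx).1, hb.1]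

theorem forall₂_extendsLeft_iff {w V : List (ℤ × ℤ)} :
    Forall₂ ExtendsLeft w V ↔
      w.map Prod.snd = V.map Prod.snd ∧ Forall₂ (· ≤ ·) (w.map Prod.fst) (V.map Prod.fst) := by
  induction w generalizing V with
  | nil => cases V <;> simp
  | cons q w ih =>
    cases V with
    | nil => simp
    | cons p V => simp only [forall₂_cons, ih, List.map_cons, cons.injEq, ExtendsLeft]; tauto

theorem bounds_of_forall₂_extendsLeft {n : ℤ} {w V : List (ℤ × ℤ)} (h : Forall₂ ExtendsLeft w V)
    (hV : ∀ p ∈ V, p.1 ≤ p.2 ∧ p.2 ≤ n) : ∀ q ∈ w, q.1 ≤ q.2 ∧ q.2 ≤ n := by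
  induction h with
  | nil => simp
  | cons hqp _ ih =>
    simp only [forall_mem_cons] at hV ⊢
    obtain ⟨h₂, h₁⟩ := hqp
    exact ⟨⟨h₁.trans (h₂ ▸ hV.1.1), h₂ ▸ hV.1.2⟩, ih hV.2⟩

theorem isPNF_iff_mem_boundedChains {n : ℤ} {w V : List (ℤ × ℤ)}
    (hV : ∀ p ∈ V, p.1 ≤ p.2 ∧ p.2 ≤ n) (hVs : IsChain (EndpointStep n) (V.map Prod.snd))
    (h : Forall₂ ExtendsLeft w V) :
    IsPNF n w ↔ w.map Prod.fst ∈ boundedChains (V.map Prod.fst) n := by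
  obtain ⟨hs, hf⟩ := forall₂_extendsLeft_iff.mp h
  have hw := bounds_of_forall₂_extendsLeft h hV
  have hhead : ∀ x ∈ (w.map Prod.fst).head?, x ≤ n := by
    intro x hx
    obtain ⟨q, hq, rfl⟩ := mem_map.mp (mem_of_mem_head? hx)
    exact (hw q hq).1.trans (hw q hq).2
  rw [isPNF_iff, mem_boundedChains, forall₂_and_left, hs]
  simp only [hVs, hf, forall_mem_map, and_true]
  exact ⟨fun ⟨h0, hc⟩ => ⟨fun q hq => (h0 q hq).1, hhead, hc⟩,
    fun ⟨h0, _, hc⟩ => ⟨fun q hq => ⟨h0 q hq, hw q hq⟩, hc⟩⟩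

theorem card_isPNF_forall₂_extendsLeft {n : ℤ} {V : List (ℤ × ℤ)}
    (hV : ∀ p ∈ V, p.1 ≤ p.2 ∧ p.2 ≤ n) (hVs : IsChain (EndpointStep n) (V.map Prod.snd)) :
    Nat.card {w // IsPNF n w ∧ Forall₂ ExtendsLeft w V} = #(boundedChains (V.map Prod.fst) n) := by
  rw [← Nat.card_eq_finsetCard]
  refine Nat.card_eq_of_bijective (fun w => ⟨w.1.map Prod.fst,
    (isPNF_iff_mem_boundedChains hV hVs w.2.2).mp w.2.1⟩) ⟨?_, ?_⟩
  · intro ⟨w, _, hw⟩ ⟨w', _, hw'⟩ h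
    simp only [Subtype.mk.injEq] at h ⊢
    exact (zip_of_prod h (forall₂_extendsLeft_iff.mp hw).1).trans
      (zip_of_prod rfl (forall₂_extendsLeft_iff.mp hw').1).symm
  · rintro ⟨l, hl⟩
    have hlF := ((mem_boundedChains).mp hl).1
    have hlen : l.length = (V.map Prod.snd).length := by simpa using hlF.length_eq
    have hzip : Forall₂ ExtendsLeft (l.zip (V.map Prod.snd)) V := by
      rw [forall₂_extendsLeft_iff, map_snd_zip hlen.ge, map_fst_zip hlen.le]
      exact ⟨rfl, hlF.imp fun _ _ h => h.2⟩
    refine ⟨⟨_, (isPNF_iff_mem_boundedChains hV hVs hzip).mpr ?_, hzip⟩, ?_⟩ <;>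
      simp only [map_fst_zip hlen.le, hl]

theorem staircase_eq_map_range (m : ℕ) (f : ℕ → ℤ × ℤ)
    (hf : ∀ i : ℕ, f i = (2 * (m : ℤ) - 2 - 2 * i, 2 * (m : ℤ) - 2 * i)) :
    (range m).map f ++ [(0, 0)] = staircase m := by
  induction m generalizing f with
  | zero => rfl
  | succ m ih =>
    rw [range_succ_eq_map, List.map_cons, List.map_map, cons_append, staircase,
      ih (f ∘ Nat.succ) fun i => by simp only [Function.comp_apply, hf]; push_cast; ring_nf, hf]
    push_cast
    ring_nf

theorem wJ_eq_cons_staircase (m : ℕ) (n : ℤ) (hn : 1 ≤ n) (hm : 2 * m ≤ n) (hm' : n ≤ 2 * m + 1) :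
    wJ n = (2 * (m : ℤ), n) :: staircase m := by
  unfold wJ
  split_ifs with hev
  · obtain ⟨k, rfl⟩ : ∃ k : ℕ, m = k + 1 := ⟨m - 1, by grind⟩
    obtain rfl : n = 2 * k + 2 := by grind
    rw [show ((2 * (k : ℤ) + 2 - 2) / 2).toNat = k by omega,
      staircase_eq_map_range k _ fun i => by ring_nf, staircase]
    push_cast
    ring_nf
  · obtain rfl : n = 2 * m + 1 := by grind
    rw [show ((2 * (m : ℤ) + 1 - 1) / 2).toNat = m by omega,
      staircase_eq_map_range m _ fun i => by ring_nf]
    ring_nf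

theorem bounds_of_mem_staircase (m : ℕ) : ∀ p ∈ staircase m, p.1 ≤ p.2 ∧ p.2 ≤ 2 * m := by
  induction m with
  | zero => simp [staircase]
  | succ m ih =>
    simp only [staircase, forall_mem_cons]
    refine ⟨by push_cast; omega, fun p hp => ?_⟩
    have := ih p hp
    push_cast
    omega

theorem isChain_gt_map_snd_staircase (m : ℕ) : IsChain (· > ·) ((staircase m).map Prod.snd) := by
  induction m with
  | zero => simp [staircase]
  | succ m ih =>
    refine isChain_cons.mpr ⟨fun y hy => ?_, ih⟩
    obtain ⟨p, hp, rfl⟩ := mem_map.mp (mem_of_mem_head? hy)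
    have := (bounds_of_mem_staircase m p hp).2
    omega

theorem isChain_endpointStep_cons_map_snd_staircase {n : ℤ} {m : ℕ} (hm : 2 * m ≤ n) :
    IsChain (EndpointStep n) (n :: (staircase m).map Prod.snd) := by
  refine isChain_cons.mpr ⟨fun y hy => ⟨?_, fun _ => rfl⟩,
    (isChain_gt_map_snd_staircase m).imp fun _ _ h => ⟨h.le, fun e => absurd e h.ne⟩⟩
  obtain ⟨p, hp, rfl⟩ := mem_map.mp (mem_of_mem_head? hy)
  have := (bounds_of_mem_staircase m p hp).2
  omega

theorem isChain_endpointStep_replicate_append {n : ℤ} {l : List ℤ}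
    (hl : IsChain (EndpointStep n) l) (hhead : ∀ x ∈ l.head?, x ≤ n) (k : ℕ) :
    IsChain (EndpointStep n) (replicate k n ++ l) := by
  induction k with
  | zero => simpa using hl
  | succ k ih =>
    refine replicate_succ .. ▸ isChain_cons.mpr ⟨fun y hy => ⟨?_, fun _ => rfl⟩, ih⟩
    cases k with
    | zero => simpa using hhead y hy
    | succ k => simp [replicate_succ] at hy; omega

theorem leftExtCount_cons {n : ℤ} {p : ℤ × ℤ} {W : List (ℤ × ℤ)} (hp : p.2 = n)
    (hW : ∀ q ∈ p :: W, q.1 ≤ q.2 ∧ q.2 ≤ n)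
    (hWs : IsChain (EndpointStep n) ((p :: W).map Prod.snd)) (t : ℕ) :
    leftExtCount n (p :: W) t = #(boundedChains (replicate t n ++ (p :: W).map Prod.fst) n) := by
  have hV : ∀ q ∈ replicate t (n, n) ++ p :: W, q.1 ≤ q.2 ∧ q.2 ≤ n := by
    simp only [mem_append, mem_replicate]
    rintro q (⟨-, rfl⟩ | hq)
    exacts [⟨le_rfl, le_rfl⟩, hW q hq]
  have hVs : IsChain (EndpointStep n) ((replicate t (n, n) ++ p :: W).map Prod.snd) := by
    rw [map_append, map_replicate]
    exact isChain_endpointStep_replicate_append hWs (by simp [hp]) t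
  rw [leftExtCount, Nat.card_congr (Equiv.subtypeEquivRight fun w =>
    and_congr_right (isLeftExtension_iff hp)), card_isPNF_forall₂_extendsLeft hV hVs,
    map_append, map_replicate]

theorem two_mul_leftExtCount_wJ (m : ℕ) (n : ℤ) (hn : 1 ≤ n) (hm : 2 * m ≤ n) (hm' : n ≤ 2 * m + 1)
    (t : ℕ) : 2 * leftExtCount n (wJ n) t = blobbedC (n + 1) (2 * t + (2 * m + 1) - n) := by
  have hbounds : ∀ q ∈ (2 * (m : ℤ), n) :: staircase m, q.1 ≤ q.2 ∧ q.2 ≤ n := by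
    refine forall_mem_cons.mpr ⟨⟨hm, le_rfl⟩, fun q hq => ?_⟩
    have := bounds_of_mem_staircase m q hq
    omega
  rw [wJ_eq_cons_staircase m n hn hm hm', leftExtCount_cons rfl hbounds
    (isChain_endpointStep_cons_map_snd_staircase hm), List.map_cons]
  exact two_mul_card_boundedChains_replicate_append n _ _ hm'
    (fun c hc _ => two_mul_card_boundedChains_staircase m c hc (by omega)) t n (by omega) le_rfl

/-- For `n ≥ 1` and `t ≥ 0`: if `n` is even then `2·j(n,t) = C(n+1,2t+1)`, and if `n`
is odd then `2·j(n,t) = C(n+1,2t)`. -/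
theorem leftExtCount_wJ (n : ℤ) (t : ℕ) (hn : 1 ≤ n) :
    (Even n → 2 * leftExtCount n (wJ n) t = blobbedC (n + 1) (2 * (t : ℤ) + 1)) ∧
    (Odd n → 2 * leftExtCount n (wJ n) t = blobbedC (n + 1) (2 * (t : ℤ))) := by
  have hcount := two_mul_leftExtCount_wJ (n / 2).toNat n hn (by omega) (by omega) t
  refine ⟨fun hev => ?_, fun hodd => ?_⟩ <;> rw [hcount] <;> congr 1
  · obtain ⟨k, rfl⟩ := hev
    omega
  · obtain ⟨k, rfl⟩ := hodd
    omega
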